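/- arXiv:2310.01325 — 5 statements merged into one kernel-verified Lean document; each statement's English description precedes it below -/
import Mathlib

section
/- For every integer n ≥ 0, the denominator of the sum-of-powers polynomial S_n(x) = (B_{n+1}(x) − B_{n+1})/(n+1) satisfies denom(S_n(x)) = (n+1) · D_{n+1}. -/
/-! Since `B_{n+1}(x) - B_{n+1}` is monic of degree `n + 1`, the leading coefficient of `S_n` is
`1/(n+1)`, so `n + 1` divides `denom (S_n)`; and for a multiple `(n + 1) e` of `n + 1`, the
polynomial `(n + 1) e • S_n = e • (B_{n+1}(x) - B_{n+1})` is integral exactly when `D_{n+1} ∣ e`. -/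

/-- A rational polynomial has only integral coefficients. -/
def IsIntPoly (f : Polynomial ℚ) : Prop := ∀ i, (f.coeff i).den = 1

/-- The least positive integer `d` such that `d • f` has only integral coefficients. -/
noncomputable def polyDenom (f : Polynomial ℚ) : ℕ :=
  sInf {d : ℕ | 0 < d ∧ IsIntPoly ((d : ℚ) • f)}

/-- Sum of base-`p` digits of `n`. -/
def sd (p n : ℕ) : ℕ := (Nat.digits p n).sum

/-- Radical (squarefree kernel) of `n`. -/
def rad (n : ℕ) : ℕ := ∏ p ∈ n.primeFactors, p

/-- `D n = denom (B_n(x) - B_n)`. -/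
noncomputable def D (n : ℕ) : ℕ :=
  polyDenom (Polynomial.bernoulli n - Polynomial.C (bernoulli n))

/-- `DB n = denom (B_n(x))`. -/
noncomputable def DB (n : ℕ) : ℕ := polyDenom (Polynomial.bernoulli n)

/-- `D̂ n`: product of primes `p` with `p ∤ n` and `s_p(n) ≥ p`.
(Any such prime satisfies `p ≤ s_p(n) ≤ n`.) -/
def Dhat (n : ℕ) : ℕ :=
  ∏ p ∈ (Finset.range (n + 1)).filter (fun p => p.Prime ∧ ¬ p ∣ n ∧ p ≤ sd p n), p

/-- `D̃ n`: product of primes `p` with `p ∣ n` and `s_p(n) ≥ p`. -/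
def Dtilde (n : ℕ) : ℕ :=
  ∏ p ∈ (Finset.range (n + 1)).filter (fun p => p.Prime ∧ p ∣ n ∧ p ≤ sd p n), p

/-- `Ď n`: product of primes `p` with `p ∣ n` and `s_p(n) < p`. -/
def Dcheck (n : ℕ) : ℕ :=
  ∏ p ∈ (Finset.range (n + 1)).filter (fun p => p.Prime ∧ p ∣ n ∧ sd p n < p), p

/-- `D⁺ n`: product of primes `p` with `p > √n` and `s_p(n) ≥ p`. -/
def Dplus (n : ℕ) : ℕ :=
  ∏ p ∈ (Finset.range (n + 1)).filter (fun p => p.Prime ∧ n < p ^ 2 ∧ p ≤ sd p n), p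

/-- The sum-of-powers polynomial `S_n(x) = (B_{n+1}(x) - B_{n+1}) / (n+1)`. -/
noncomputable def Spoly (n : ℕ) : Polynomial ℚ :=
  Polynomial.C (((n : ℚ) + 1)⁻¹) *
    (Polynomial.bernoulli (n + 1) - Polynomial.C (bernoulli (n + 1)))

open Polynomial

theorem Rat.den_natCast_mul_eq_one_iff (q : ℚ) (d : ℕ) : ((d : ℚ) * q).den = 1 ↔ q.den ∣ d := by
  have hq : (d : ℚ) * q = ((d * q.num : ℤ) : ℚ) / ((q.den : ℤ) : ℚ) := by
    push_cast
    rw [mul_div_assoc, Rat.num_div_den]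
  rw [hq, Rat.den_div_intCast_eq_one_iff _ _ (by exact_mod_cast q.den_ne_zero), Int.natCast_dvd,
    Int.natAbs_mul, Int.natAbs_natCast, q.reduced.symm.dvd_mul_right]

theorem isIntPoly_natCast_smul_iff (f : ℚ[X]) (d : ℕ) :
    IsIntPoly ((d : ℚ) • f) ↔ ∀ i, (f.coeff i).den ∣ d := by
  simp only [IsIntPoly, coeff_smul, smul_eq_mul, Rat.den_natCast_mul_eq_one_iff]

theorem lcm_den_coeff_dvd_iff (f : ℚ[X]) (d : ℕ) :
    f.support.lcm (fun i => (f.coeff i).den) ∣ d ↔ IsIntPoly ((d : ℚ) • f) := by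
  rw [Finset.lcm_dvd_iff, isIntPoly_natCast_smul_iff]
  refine ⟨fun h i => ?_, fun h i _ => h i⟩
  by_cases hi : i ∈ f.support
  · exact h i hi
  · simp [notMem_support_iff.mp hi]

theorem polyDenom_eq_lcm (f : ℚ[X]) :
    polyDenom f = f.support.lcm fun i => (f.coeff i).den := by
  set L := f.support.lcm fun i => (f.coeff i).den
  have hL : 0 < L ∧ IsIntPoly ((L : ℚ) • f) :=
    ⟨Nat.pos_of_ne_zero (by simp [L, Finset.lcm_eq_zero_iff]),
      (lcm_den_coeff_dvd_iff f L).mp dvd_rfl⟩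
  refine le_antisymm (Nat.sInf_le hL) (le_csInf ⟨L, hL⟩ ?_)
  rintro d ⟨hd, hfd⟩
  exact Nat.le_of_dvd hd ((lcm_den_coeff_dvd_iff f d).mpr hfd)

theorem polyDenom_dvd_iff (f : ℚ[X]) (d : ℕ) :
    polyDenom f ∣ d ↔ IsIntPoly ((d : ℚ) • f) := by
  rw [polyDenom_eq_lcm, lcm_den_coeff_dvd_iff]

theorem polyDenom_C_inv_mul_of_coeff_eq_one {f : ℚ[X]} {k : ℕ} (hk : f.coeff k = 1) {m : ℕ}
    (hm : m ≠ 0) : polyDenom (C (m : ℚ)⁻¹ * f) = m * polyDenom f := by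
  have hscale (e : ℕ) : ((m * e : ℕ) : ℚ) • (C (m : ℚ)⁻¹ * f) = (e : ℚ) • f := by
    rw [C_mul', smul_smul]
    congr 1
    field_simp
    push_cast
    ring
  apply Nat.dvd_antisymm
  · rw [polyDenom_dvd_iff, hscale, ← polyDenom_dvd_iff]
  · have hint := (polyDenom_dvd_iff (C (m : ℚ)⁻¹ * f) _).mp dvd_rfl
    obtain ⟨e, he⟩ : m ∣ polyDenom (C (m : ℚ)⁻¹ * f) := by
      have hden := (isIntPoly_natCast_smul_iff _ _).mp hint k
      rwa [coeff_C_mul, hk, mul_one, Rat.inv_natCast_den_of_pos (Nat.pos_of_ne_zero hm)] at hden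
    rw [he, hscale, ← polyDenom_dvd_iff] at hint
    rw [he]
    exact mul_dvd_mul_left m hint

theorem coeff_bernoulli_sub_C_bernoulli_self (n : ℕ) :
    (Polynomial.bernoulli (n + 1) - C (_root_.bernoulli (n + 1))).coeff (n + 1) = 1 := by
  simp [coeff_bernoulli]

/-- For `n ≥ 0`, `denom (S_n(x)) = (n+1) · D_{n+1}`. -/
theorem stmt_1 (n : ℕ) :
    polyDenom (Spoly n) = (n + 1) * D (n + 1) := by
  rw [Spoly, D, ← Nat.cast_succ]
  exact polyDenom_C_inv_mul_of_coeff_eq_one (coeff_bernoulli_sub_C_bernoulli_self n)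
    n.succ_ne_zero
end

section
/- For every integer n ≥ 1, the denominator DB_n of the n-th Bernoulli polynomial B_n(x) is even; in particular, B_n(x) ∉ ℤ[x] for all n ≥ 1. -/
/-! Every coefficient's denominator divides `DB n`, so it suffices to exhibit a coefficient of
`B_n(x)` with even denominator. For odd `n` this is the coefficient `n B_1 = -n/2` of `x^(n-1)`;
for even `n` it is the constant term `B_n`, whose denominator is divisible by every prime `p`
with `p - 1 ∣ n` (von Staudt–Clausen), in particular by `2`. -/

theorem Rat.dvd_den_of_dvd_den_add {p : ℕ} {q r : ℚ} (hp : p.Prime) (h : p ∣ (q + r).den)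
    (hr : ¬ p ∣ r.den) : p ∣ q.den :=
  (hp.dvd_mul.mp (h.trans (Rat.add_den_dvd q r))).resolve_right hr

theorem Rat.den_dvd_of_den_natCast_mul_eq_one {c : ℚ} {d : ℕ} (h : ((d : ℚ) * c).den = 1) :
    c.den ∣ d := by
  have hc : (d : ℚ) * c = ((d * c.num : ℤ) : ℚ) / ((c.den : ℤ) : ℚ) := by
    push_cast
    rw [mul_div_assoc, Rat.num_div_den]
  rw [hc, Rat.den_div_intCast_eq_one_iff _ _ (by exact_mod_cast c.den_nz)] at h
  have h' : c.den ∣ d * c.num.natAbs := by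
    simpa [Int.natAbs_mul] using Int.natAbs_dvd_natAbs.mpr h
  exact c.reduced.symm.dvd_of_dvd_mul_right h'

theorem isIntPoly_polyDenom_smul (f : Polynomial ℚ) : IsIntPoly ((polyDenom f : ℚ) • f) := by
  by_cases h : {d : ℕ | 0 < d ∧ IsIntPoly ((d : ℚ) • f)}.Nonempty
  · exact (Nat.sInf_mem h).2
  · rw [Set.not_nonempty_iff_eq_empty] at h
    intro i
    simp [polyDenom, h]

theorem den_coeff_dvd_polyDenom (f : Polynomial ℚ) (i : ℕ) :
    (f.coeff i).den ∣ polyDenom f := by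
  have h := isIntPoly_polyDenom_smul f i
  rw [Polynomial.coeff_smul, smul_eq_mul] at h
  exact Rat.den_dvd_of_den_natCast_mul_eq_one h

theorem prime_dvd_den_bernoulli {p k : ℕ} (hp : p.Prime) (hk : 0 < k) (hpk : p - 1 ∣ 2 * k) :
    p ∣ (bernoulli (2 * k)).den := by
  set P := (Finset.range (2 * k + 2)).filter (fun q => q.Prime ∧ q - 1 ∣ 2 * k)
  have hpP : p ∈ P := by
    simp only [P, Finset.mem_filter, Finset.mem_range]
    have := Nat.le_of_dvd (by omega) hpk
    exact ⟨by omega, hp, hpk⟩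
  obtain ⟨z, hz⟩ := Bernoulli.vonStaudt_clausen k
  set r := ∑ q ∈ P.erase p, (1 : ℚ) / q
  -- the other primes of the von Staudt–Clausen sum contribute a denominator prime to `p`
  have hr : ¬ p ∣ r.den := by
    intro hdvd
    obtain ⟨q, hq, hpq⟩ := (Prime.dvd_finsetProd_iff hp.prime _).mp
      (hdvd.trans (Finset.Rat.den_sum_dvd_prod_den _ _))
    obtain ⟨hqp, hqP⟩ := Finset.mem_erase.mp hq
    have hqprime := (Finset.mem_filter.mp hqP).2.1
    rw [one_div, Rat.inv_natCast_den_of_pos hqprime.pos] at hpq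
    exact hqp ((Nat.prime_dvd_prime_iff_eq hp hqprime).mp hpq).symm
  have hsum : bernoulli (2 * k) + r = z - 1 / p := by
    rw [hz, ← Finset.add_sum_erase P _ hpP]
    ring
  refine Rat.dvd_den_of_dvd_den_add hp ?_ hr
  rw [hsum, Rat.intCast_sub_den, one_div, Rat.inv_natCast_den_of_pos hp.pos]

theorem exists_two_dvd_den_coeff_bernoulli {n : ℕ} (hn : 1 ≤ n) :
    ∃ i, 2 ∣ ((Polynomial.bernoulli n).coeff i).den := by
  rcases Nat.even_or_odd n with ⟨k, rfl⟩ | hodd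
  · refine ⟨0, ?_⟩
    rw [Polynomial.coeff_zero_eq_eval_zero, Polynomial.bernoulli_eval_zero, ← two_mul]
    exact prime_dvd_den_bernoulli Nat.prime_two (by omega) (by simp)
  · refine ⟨n - 1, ?_⟩
    have hcoeff :
        (Polynomial.bernoulli n).coeff (n - 1) = ((-n : ℤ) : ℚ) / ((2 : ℤ) : ℚ) := by
      rw [Polynomial.coeff_bernoulli, if_pos (by omega), Nat.sub_sub_self hn, bernoulli_one,
        Nat.choose_symm_of_eq_add (Nat.sub_add_cancel hn).symm, Nat.choose_one_right]
      push_cast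
      ring
    have hden : (((-n : ℤ) : ℚ) / ((2 : ℤ) : ℚ)).den = 2 := by
      exact_mod_cast Rat.den_div_eq_of_coprime (a := -n) (b := 2) (by norm_num)
        (by simpa using hodd)
    rw [hcoeff, hden]

/-- For `n ≥ 1`, `DB n` is even; in particular `B_n(x) ∉ ℤ[x]`. -/
theorem stmt_5 (n : ℕ) (hn : 1 ≤ n) :
    2 ∣ DB n ∧ ¬ IsIntPoly (Polynomial.bernoulli n) := by
  obtain ⟨i, hi⟩ := exists_two_dvd_den_coeff_bernoulli hn
  exact ⟨hi.trans (den_coeff_dvd_polyDenom _ i), fun hint => by have := hint i; omega⟩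
end

section
/- For every integer n ≥ 1, the number D̂_n is even if n is odd and n ≥ 3, and D̂_n is odd otherwise (i.e., D̂_1 = 1 is odd and D̂_n is odd for even n). -/
lemma sd_pos {b n : ℕ} (hb : 1 < b) (hn : 0 < n) : 0 < sd b n := by
  rcases Nat.lt_or_ge n b with h | h
  · have : Nat.digits b n = [n] := Nat.digits_def' hb hn ▸ by
      rw [Nat.mod_eq_of_lt h, Nat.div_eq_of_lt h, Nat.digits_zero]
    simpa [sd, this] using hn
  · rw [sd, Nat.digits_def' hb hn]
    have : 0 < n / b := Nat.div_pos h (by omega)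
    have hne : Nat.digits b (n / b) ≠ [] := Nat.digits_ne_nil_iff_ne_zero.mpr this.ne'
    have := Nat.getLast_digit_ne_zero b this.ne' (m := n / b)
    have hmem := List.getLast_mem hne
    have : 0 < (Nat.digits b (n / b)).sum := by
      calc 0 < (Nat.digits b (n / b)).getLast hne := Nat.pos_of_ne_zero ‹_›
        _ ≤ _ := List.single_le_sum (fun _ _ => Nat.zero_le _) _ hmem
    simp [List.sum_cons]
    omega

/-- For `n ≥ 1`, `D̂ n` is even if `n` is odd and `n ≥ 3`,
and `D̂ n` is odd otherwise. -/
theorem stmt_6 (n : ℕ) (hn : 1 ≤ n) :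
    (Odd n ∧ 3 ≤ n → Even (Dhat n)) ∧ (¬ (Odd n ∧ 3 ≤ n) → Odd (Dhat n)) := by
  constructor
  · rintro ⟨hodd, h3⟩
    have h2 : ¬ 2 ∣ n := by
      rcases hodd with ⟨k, hk⟩; omega
    have hsd : 2 ≤ sd 2 n := by
      have hnpos : 0 < n := by omega
      rw [sd, Nat.digits_def' (by norm_num) hnpos]
      have hmod : n % 2 = 1 := Nat.odd_iff.mp hodd
      have hdiv : 0 < n / 2 := by omega
      have := sd_pos (b := 2) (by norm_num) hdiv
      rw [sd] at this
      simp [List.sum_cons, hmod]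
      omega
    have hmem : 2 ∈ (Finset.range (n + 1)).filter
        (fun p => p.Prime ∧ ¬ p ∣ n ∧ p ≤ sd p n) := by
      simp only [Finset.mem_filter, Finset.mem_range]
      exact ⟨by omega, Nat.prime_two, h2, hsd⟩
    have := Finset.dvd_prod_of_mem id hmem
    exact (even_iff_two_dvd).mpr this
  · intro h
    have hodd : ∀ p ∈ (Finset.range (n + 1)).filter
        (fun p => p.Prime ∧ ¬ p ∣ n ∧ p ≤ sd p n), Odd p := by
      intro p hp
      simp only [Finset.mem_filter, Finset.mem_range] at hp
      obtain ⟨hpr, hprime, hndvd, hsd⟩ := hp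
      rcases hprime.eq_two_or_odd' with rfl | hpodd
      · exfalso
        rcases Nat.even_or_odd n with he | ho
        · exact hndvd he.two_dvd
        · have h3 : ¬ 3 ≤ n := fun h3 => h ⟨ho, h3⟩
          interval_cases n
          · simp [sd] at hsd
          · exact hndvd ⟨1, rfl⟩
      · exact hpodd
    exact Finset.prod_induction _ Odd (fun a b ha hb => ha.mul hb) odd_one hodd
end

section
/- Assume there exists an integer n_0 such that D⁺_n > 1 for every integer n > n_0 (in particular, this follows if ω(D⁺_n) ~ κ·√n/log n as n → ∞ for some constant κ > 1). Then the set {n ≥ 1 : B'_n(x) ∈ ℤ[x]} of indices whose Bernoulli polynomial derivative has only integral coefficients is finite. -/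
/-!
If `p > √n` and `s_p(n) ≥ p`, write `n = a p + b` with digits `a + b ≥ p` and put
`m = (a + 1)(p - 1) = a p + (p - 1 - a) ≤ n - 1`. Since `B'_n = n B_{n-1}(x)`, the coefficient
of `x^(n-1-m)` in `B'_n` is `n · C(n-1, m) · B_m`. Here `p ∤ n` because `b ≠ 0`,
`p ∤ C(n-1, m)` by Lucas' theorem since the digits of `m` lie below those of `n - 1`, and `p`
divides the denominator of `B_m` by von Staudt–Clausen since `p - 1 ∣ m`. So every `n` with
`D⁺_n > 1` has `B'_n ∉ ℤ[x]`.
-/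

lemma sd_eq_mod_add_div {p n : ℕ} (hp : 1 < p) (hn : n < p ^ 2) : sd p n = n % p + n / p := by
  rcases Nat.eq_zero_or_pos n with rfl | hn0
  · simp [sd]
  have hdiv : n / p < p := Nat.div_lt_of_lt_mul (by rwa [← sq])
  rw [sd, Nat.digits_eq_cons_digits_div hp hn0.ne', List.sum_cons]
  rcases Nat.eq_zero_or_pos (n / p) with h | h
  · simp [h]
  · simp [Nat.digits_of_lt p (n / p) h.ne' hdiv]

lemma not_dvd_choose_mul_add {p a c d : ℕ} (hp : p.Prime) (hcd : c ≤ d) (hdp : d < p) :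
    ¬ p ∣ (p * a + d).choose (p * a + c) := by
  have : Fact p.Prime := ⟨hp⟩
  have hlucas := Choose.choose_modEq_choose_mod_mul_choose_div_nat
    (n := p * a + d) (k := p * a + c) (p := p)
  simp only [Nat.mul_add_mod, Nat.mul_add_div hp.pos, Nat.div_eq_of_lt hdp,
    Nat.div_eq_of_lt (hcd.trans_lt hdp), Nat.mod_eq_of_lt hdp,
    Nat.mod_eq_of_lt (hcd.trans_lt hdp), Nat.choose_self, mul_one] at hlucas
  rw [hlucas.dvd_iff dvd_rfl]
  intro hdvd
  have hfact : p ∣ d.factorial := hdvd.trans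
    (Dvd.intro _ (by rw [← mul_assoc]; exact Nat.choose_mul_factorial_mul_factorial hcd))
  exact absurd ((hp.dvd_factorial).1 hfact) (not_le.2 hdp)

lemma padicNorm_bernoulli_of_sub_one_dvd {p m : ℕ} [hp : Fact p.Prime] (hm : m ≠ 0)
    (heven : Even m) (hpm : p - 1 ∣ m) : padicNorm p (bernoulli m) = p := by
  obtain ⟨k, rfl⟩ := heven
  rw [← two_mul] at hpm ⊢
  obtain ⟨z, hz⟩ := Bernoulli.vonStaudt_clausen k
  set S := {q ∈ Finset.range (2 * k + 2) | q.Prime ∧ q - 1 ∣ 2 * k}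
  have hpS : p ∈ S := Finset.mem_filter.2
    ⟨Finset.mem_range.2 (by have := Nat.le_of_dvd (by omega) hpm; omega), hp.out, hpm⟩
  have hrest : padicNorm p (∑ q ∈ S.erase p, (1 : ℚ) / q) ≤ 1 := by
    refine padicNorm.sum_le' (fun q hq => ?_) zero_le_one
    obtain ⟨hqp, hqS⟩ := Finset.mem_erase.1 hq
    have hq : q.Prime := (Finset.mem_filter.1 hqS).2.1
    rw [padicNorm.div, padicNorm.one, (padicNorm.nat_eq_one_iff q).2
      ((Nat.prime_dvd_prime_iff_eq hp.out hq).not.2 (Ne.symm hqp)), div_one]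
  have hint : padicNorm p ((z : ℚ) - ∑ q ∈ S.erase p, (1 : ℚ) / q) ≤ 1 :=
    padicNorm.sub.trans (max_le (padicNorm.of_int z) hrest)
  have hinv : padicNorm p (-(1 / p : ℚ)) = p := by
    rw [padicNorm.neg, padicNorm.div, padicNorm.one, padicNorm.padicNorm_p_of_prime, one_div,
      inv_inv]
  have hp1 : (1 : ℚ) < p := by exact_mod_cast hp.out.one_lt
  have hB :
      bernoulli (2 * k) = ((z : ℚ) - ∑ q ∈ S.erase p, (1 : ℚ) / q) + -(1 / p : ℚ) := by
    rw [hz, ← Finset.add_sum_erase S _ hpS]; ring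
  rw [hB, padicNorm.add_eq_max_of_ne (by rw [hinv]; exact (hint.trans_lt hp1).ne), hinv,
    max_eq_right (hint.trans hp1.le)]

open Polynomial

lemma coeff_derivative_bernoulli {n i : ℕ} (hi : i ≤ n - 1) :
    (derivative (bernoulli n)).coeff i =
      n * (_root_.bernoulli (n - 1 - i) * (n - 1).choose i) := by
  rw [derivative_bernoulli, ← C_eq_natCast, coeff_C_mul, coeff_bernoulli, if_pos hi]

lemma not_isIntPoly_derivative_bernoulli {p n : ℕ} (hp : p.Prime) (hn : n < p ^ 2)
    (hsd : p ≤ sd p n) : ¬ IsIntPoly (derivative (bernoulli n)) := by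
  have : Fact p.Prime := ⟨hp⟩
  set a := n / p
  set b := n % p
  have hab : p ≤ b + a := sd_eq_mod_add_div hp.one_lt hn ▸ hsd
  have hn_eq : p * a + b = n := Nat.div_add_mod n p
  have hb : b < p := Nat.mod_lt n hp.pos
  have ha : a < p := Nat.div_lt_of_lt_mul (by rwa [← sq])
  set m := (a + 1) * (p - 1)
  have hm : m = p * a + (p - 1 - a) := by
    obtain ⟨c, hc⟩ : ∃ c, p = a + c + 1 := ⟨p - 1 - a, by omega⟩
    simp only [m, hc, Nat.add_sub_cancel, show a + c - a = c by omega]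
    ring
  have hN : n - 1 = p * a + (b - 1) := by omega
  have hm_even : Even m := by
    rcases hp.eq_two_or_odd with hp2 | hodd
    · have ha1 : a = 1 := by omega
      simp [m, hp2, ha1]
    · exact (hp.even_sub_one (by omega)).mul_left _
  have hpn : ¬ p ∣ n := by rw [Nat.dvd_iff_mod_eq_zero]; omega
  have hchoose : ¬ p ∣ (n - 1).choose m := by
    rw [hN, hm]
    exact not_dvd_choose_mul_add hp (by omega) (by omega)
  have hcoeff := coeff_derivative_bernoulli (n := n) (i := n - 1 - m) (by omega)
  rw [show n - 1 - (n - 1 - m) = m by omega, Nat.choose_symm (by omega)] at hcoeff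
  have hnorm : padicNorm p ((derivative (bernoulli n)).coeff (n - 1 - m)) = p := by
    rw [hcoeff, padicNorm.mul, padicNorm.mul, (padicNorm.nat_eq_one_iff n).2 hpn,
      padicNorm_bernoulli_of_sub_one_dvd (Nat.mul_ne_zero a.succ_ne_zero (by omega)) hm_even
        (dvd_mul_left _ _),
      (padicNorm.nat_eq_one_iff _).2 hchoose, one_mul, mul_one]
  intro hint
  have hle := padicNorm.of_int (p := p) ((derivative (bernoulli n)).coeff (n - 1 - m)).num
  rw [Rat.coe_int_num_of_den_eq_one (hint _), hnorm] at hle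
  exact absurd hle (not_le.2 (by exact_mod_cast hp.one_lt))

lemma exists_prime_of_one_lt_Dplus {n : ℕ} (h : 1 < Dplus n) :
    ∃ p, p.Prime ∧ n < p ^ 2 ∧ p ≤ sd p n := by
  obtain ⟨p, hp⟩ := Finset.nonempty_of_prod_ne_one h.ne'
  exact ⟨p, (Finset.mem_filter.1 hp).2⟩

/-- If there is `n₀` with `D⁺ n > 1` for all `n > n₀`, then
the set of `n ≥ 1` with `B'_n(x) ∈ ℤ[x]` is finite. -/
theorem stmt_10 (h : ∃ n₀ : ℕ, ∀ n : ℕ, n₀ < n → 1 < Dplus n) :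
    Set.Finite {n : ℕ | 1 ≤ n ∧
      IsIntPoly (Polynomial.derivative (Polynomial.bernoulli n))} := by
  obtain ⟨n₀, hn₀⟩ := h
  refine (Set.finite_Iic n₀).subset fun n ⟨_, hint⟩ => ?_
  by_contra hn
  obtain ⟨p, hp, hnp, hsd⟩ := exists_prime_of_one_lt_Dplus (hn₀ n (not_le.1 hn))
  exact not_isIntPoly_derivative_bernoulli hp hnp hsd hint
end

section
/- Let n, k ≥ 1 be integers. If ω(D⁺_n) ≥ 2k, then D⁺_n > (n+1)(n+2)···(n+k) = (n+k)!/n!. -/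
/-! Every prime factor of `D⁺ n` exceeds `m = ⌊√n⌋ + 1 > √n`, so `D⁺ n ≥ m (m+1) ⋯ (m+2k-1)`, the
least possible product of `2k` distinct integers `≥ m`. Pairing consecutive factors,
`n + j < (m + 2j - 2)(m + 2j - 1)` because `n < m²`, hence this product beats `(n+1) ⋯ (n+k)`. -/

open Finset

namespace Nat

theorem prod_Icc_add_eq_ascFactorial (n k : ℕ) :
    ∏ i ∈ Icc 1 k, (n + i) = (n + 1).ascFactorial k := by
  induction k with
  | zero => simp
  | succ k ih =>
    rw [prod_Icc_succ_top (by omega), ih, ascFactorial_succ]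
    ring

theorem ascFactorial_le_ascFactorial_of_le {m k l : ℕ} (hm : 0 < m) (hkl : k ≤ l) :
    m.ascFactorial k ≤ m.ascFactorial l := by
  obtain ⟨j, rfl⟩ := Nat.exists_eq_add_of_le hkl
  obtain ⟨m, rfl⟩ : ∃ m', m = m' + 1 := ⟨m - 1, by omega⟩
  exact Nat.le_of_dvd (ascFactorial_pos m (k + j))
    (Dvd.intro _ (ascFactorial_mul_ascFactorial _ _ _))

theorem ascFactorial_card_le_prod {a : ℕ} (s : Finset ℕ) (hs : ∀ x ∈ s, a ≤ x) :
    a.ascFactorial #s ≤ ∏ x ∈ s, x := by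
  induction s using Finset.induction_on_max with
  | empty => simp
  | insert x s hlt ih =>
    have hxs : x ∉ s := fun hx => lt_irrefl x (hlt x hx)
    have hcard : #s ≤ x - a := by
      simpa using card_le_card (fun y hy => mem_Ico.2 ⟨hs y (mem_insert_of_mem hy), hlt y hy⟩ :
        s ⊆ Ico a x)
    have hax : a + #s ≤ x := by
      have := hs x (mem_insert_self x s)
      omega
    rw [card_insert_of_notMem hxs, prod_insert hxs, ascFactorial_succ]
    exact Nat.mul_le_mul hax (ih fun y hy => hs y (mem_insert_of_mem hy))

theorem ascFactorial_card_primeFactors_le {N a : ℕ} (hN : N ≠ 0)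
    (h : ∀ p ∈ N.primeFactors, a ≤ p) : a.ascFactorial #N.primeFactors ≤ N :=
  (ascFactorial_card_le_prod _ h).trans
    (Nat.le_of_dvd (Nat.pos_of_ne_zero hN) (prod_primeFactors_dvd N))

theorem succ_ascFactorial_lt_ascFactorial_two_mul {n m k : ℕ} (hnm : n < m ^ 2) (hk : 0 < k) :
    (n + 1).ascFactorial k < m.ascFactorial (2 * k) := by
  induction k, hk using Nat.le_induction with
  | base =>
    simp only [ascFactorial_succ, ascFactorial_zero]
    nlinarith
  | succ k _ ih =>
    rw [show 2 * (k + 1) = 2 * k + 1 + 1 by ring, ascFactorial_succ, ascFactorial_succ,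
      ascFactorial_succ, ← mul_assoc]
    have hpair : n + 1 + k < (m + (2 * k + 1)) * (m + 2 * k) := by nlinarith
    exact Nat.mul_lt_mul'' hpair ih

end Nat

theorem Dplus_ne_zero (n : ℕ) : Dplus n ≠ 0 :=
  prod_ne_zero_iff.2 fun _ hp => (mem_filter.1 hp).2.1.ne_zero

theorem sqrt_lt_of_mem_primeFactors_Dplus {n p : ℕ} (hp : p ∈ (Dplus n).primeFactors) :
    n.sqrt < p := by
  rw [Dplus, Nat.primeFactors_prod fun q hq => (mem_filter.1 hq).2.1] at hp
  exact Nat.sqrt_lt'.2 (mem_filter.1 hp).2.2.1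

theorem stmt_13_general (n k : ℕ) (hk : 1 ≤ k)
    (h : 2 * k ≤ (Dplus n).primeFactors.card) :
    ∏ i ∈ Finset.Icc 1 k, (n + i) < Dplus n := by
  calc ∏ i ∈ Icc 1 k, (n + i)
      = (n + 1).ascFactorial k := Nat.prod_Icc_add_eq_ascFactorial n k
    _ < (n.sqrt + 1).ascFactorial (2 * k) :=
        Nat.succ_ascFactorial_lt_ascFactorial_two_mul (Nat.lt_succ_sqrt' n) hk
    _ ≤ (n.sqrt + 1).ascFactorial #(Dplus n).primeFactors :=
        Nat.ascFactorial_le_ascFactorial_of_le n.sqrt.succ_pos h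
    _ ≤ Dplus n :=
        Nat.ascFactorial_card_primeFactors_le (Dplus_ne_zero n) fun _ hp =>
          sqrt_lt_of_mem_primeFactors_Dplus hp

/-- For `n, k ≥ 1`, if `ω(D⁺ n) ≥ 2k` then
`D⁺ n > (n+1)(n+2)⋯(n+k)`. -/
theorem stmt_13 (n k : ℕ) (hn : 1 ≤ n) (hk : 1 ≤ k)
    (h : 2 * k ≤ (Dplus n).primeFactors.card) :
    ∏ i ∈ Finset.Icc 1 k, (n + i) < Dplus n :=
  stmt_13_general n k hk h
end
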